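/- arXiv:1712.08137 — 2 statements merged into one kernel-verified Lean document; each statement's English description precedes it below -/
import Mathlib

section
/- Let h > 0 be a real number. For every integer k̄ with 2·e^{h}·w − 1 ≤ k̄ ≤ n one has ∑_{k=k̄}^{n} e^{hk}·q̃^{(n)}(k) ≤ 4·e^{w}·(e^{h}w)^{k̄}/k̄!. -/
/-! A path of jumps in `{-1, 0, 1}` ending at level `k` jumps up at least `k` times, so a union
bound over the `k`-sets of forced up-jumps gives `q̃(k) ≤ C(n,k) M^k (q₀ + 2M)^(n-k)` with
`M = w / n`; since `q₀ + 2M ≤ 1 + M ≤ e^M`, this is at most `e^w w^k / k!`. After the factor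
`e^{hk}` the terms `(e^h w)^k / k!` decrease with ratio at most `1/2` once `2 e^h w ≤ k̄ + 1`,
so the tail is at most twice its first term. -/

open Finset

open scoped Classical

noncomputable section

namespace HScut

/-- Level of a jump path `s : Fin n → ℤ` at time `t` (sum of the first `t` jumps). -/
def levelAt (n : ℕ) (s : Fin n → ℤ) (t : ℕ) : ℤ :=
  ∑ i ∈ Finset.univ.filter (fun i : Fin n => (i : ℕ) < t), s i

/-- Jump paths of length `n` with jumps of amplitude at most `m`. -/
def paths (n m : ℕ) : Finset (Fin n → ℤ) :=
  Fintype.piFinset fun _ => Finset.Icc (-(m : ℤ)) (m : ℤ)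

/-- Weight `π(s) = ∏ q (s i)` of a jump path. -/
def pathWeight (n : ℕ) (q : ℤ → ℝ) (s : Fin n → ℤ) : ℝ :=
  ∏ i, q (s i)

/-- Modified weight `π̃(s)`, where each `q (±i)` (`i ≠ 0`) is replaced by `max (q i) (q (-i))`
(which equals `w_i / n`). -/
def modWeight (n : ℕ) (q : ℤ → ℝ) (s : Fin n → ℤ) : ℝ :=
  ∏ i, (if s i = 0 then q 0 else max (q (s i)) (q (-s i)))

/-- `q^{(n)}(k)`: probability of a net balance of `k` cumulative jumps at maturity. -/
def qfull (n m : ℕ) (q : ℤ → ℝ) (k : ℤ) : ℝ :=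
  ∑ s ∈ (paths n m).filter (fun s => levelAt n s n = k), pathWeight n q s

/-- `q̃^{(n)}(k)`: enlarged probability of a net balance of `k` cumulative jumps at maturity. -/
def qtilde (n m : ℕ) (q : ℤ → ℝ) (k : ℤ) : ℝ :=
  ∑ s ∈ (paths n m).filter (fun s => levelAt n s n = k), modWeight n q s

/-- `q^{k̄,(n)}(k)`: probability of a net balance of `k` jumps at maturity while reaching at
some time a net balance higher than `k̄`. -/
def qup (n m : ℕ) (q : ℤ → ℝ) (kbar : ℕ) (k : ℤ) : ℝ :=
  ∑ s ∈ (paths n m).filter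
      (fun s => levelAt n s n = k ∧ ∃ t ≤ n, (kbar : ℤ) + 1 ≤ levelAt n s t),
    pathWeight n q s

/-- `q_{l̄}^{(n)}(k)`: probability of a net balance of `k` jumps at maturity while reaching at
some time a net balance lower than `-l̄`. -/
def qdown (n m : ℕ) (q : ℤ → ℝ) (lbar : ℕ) (k : ℤ) : ℝ :=
  ∑ s ∈ (paths n m).filter
      (fun s => levelAt n s n = k ∧ ∃ t ≤ n, levelAt n s t ≤ -(lbar : ℤ) - 1),
    pathWeight n q s

/-- `q^{cut,(n)}(k)`: probability of reaching level `k` at maturity without ever leaving the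
band `[-l̄, k̄]`. -/
def qcut (n m : ℕ) (q : ℤ → ℝ) (kbar lbar : ℕ) (k : ℤ) : ℝ :=
  ∑ s ∈ (paths n m).filter
      (fun s => levelAt n s n = k ∧
        ∀ t ≤ n, -(lbar : ℤ) ≤ levelAt n s t ∧ levelAt n s t ≤ (kbar : ℤ)),
    pathWeight n q s

/-- `P(j) = C(n,j) p^j (1-p)^(n-j)`. -/
def binomP (n : ℕ) (p : ℝ) (j : ℕ) : ℝ :=
  (n.choose j : ℝ) * p ^ j * (1 - p) ^ (n - j)

/-- Put payoff at the terminal node `(n, j, k)`. -/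
def putPayoff (n : ℕ) (S0 K σ dt h : ℝ) (j : ℕ) (k : ℤ) : ℝ :=
  max (K - S0 * Real.exp ((2 * (j : ℝ) - (n : ℝ)) * (σ * Real.sqrt dt) + h * (k : ℝ))) 0

/-- European put value `V` on the full tree. -/
def Vput (n m : ℕ) (q : ℤ → ℝ) (p S0 K σ τ h r : ℝ) : ℝ :=
  Real.exp (-(r * τ)) *
    ∑ k ∈ Finset.Icc (-((m : ℤ) * n)) ((m : ℤ) * n), ∑ j ∈ Finset.range (n + 1),
      putPayoff n S0 K σ (τ / n) h j k * binomP n p j * qfull n m q k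

/-- European put value `V^{TT}` on the truncated tree. -/
def VTT (n m : ℕ) (q : ℤ → ℝ) (p S0 K σ τ h r : ℝ) (kbar lbar : ℕ) : ℝ :=
  Real.exp (-(r * τ)) *
    ∑ k ∈ Finset.Icc (-(lbar : ℤ)) (kbar : ℤ), ∑ j ∈ Finset.range (n + 1),
      putPayoff n S0 K σ (τ / n) h j k * binomP n p j * qcut n m q kbar lbar k

/-- The sequence `W_i`: `W₁ = w₁`, `W_{i+1} = w_{i+1} + W_i^{(i+1)/i}` (real powers). -/
def Wseq (w : ℕ → ℝ) : ℕ → ℝ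
  | 0 => 0
  | 1 => w 1
  | (i + 2) => w (i + 2) + Wseq w (i + 1) ^ (((i : ℝ) + 2) / ((i : ℝ) + 1))

/-- `M_i = max { W_i, W_i^{(1-i)/i} }` (real powers). -/
def Mseq (w : ℕ → ℝ) (i : ℕ) : ℝ :=
  max (Wseq w i) (Wseq w i ^ ((1 - (i : ℝ)) / (i : ℝ)))

/-- `G = 2 m max{W_m, 1} e^{W_m} ∏_{i=1}^{m-1} M_i²`. -/
def Gconst (w : ℕ → ℝ) (m : ℕ) : ℝ :=
  2 * m * max (Wseq w m) 1 * Real.exp (Wseq w m) * ∏ i ∈ Finset.Icc 1 (m - 1), (Mseq w i) ^ 2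

/-- Value of the underlying at a node with (real) time index `i`, `j` up Brownian moves and
net jump level `l`. -/
def Sval (S0 σ dt h : ℝ) (i : ℝ) (j : ℕ) (l : ℤ) : ℝ :=
  S0 * Real.exp ((2 * (j : ℝ) - i) * (σ * Real.sqrt dt) + (l : ℝ) * h)

/-- Full backward European put price; `VEfull … d j l` is the value `V_E(n-d, j, l)`
(`d` = number of remaining steps). -/
def VEfull (n m : ℕ) (q : ℤ → ℝ) (p dt S0 K σ h r : ℝ) : ℕ → ℕ → ℤ → ℝ
  | 0, j, l => max (K - Sval S0 σ dt h (n : ℝ) j l) 0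
  | (d + 1), j, l =>
      Real.exp (-(r * dt)) *
        ∑ k ∈ Finset.Icc (-(m : ℤ)) (m : ℤ),
          (VEfull n m q p dt S0 K σ h r d (j + 1) (l + k) * p +
            VEfull n m q p dt S0 K σ h r d j (l + k) * (1 - p)) * q k

/-- Full backward American put price; `VAfull … d j l` is the value `V_A(n-d, j, l)`. -/
def VAfull (n m : ℕ) (q : ℤ → ℝ) (p dt S0 K σ h r : ℝ) : ℕ → ℕ → ℤ → ℝ
  | 0, j, l => max (K - Sval S0 σ dt h (n : ℝ) j l) 0
  | (d + 1), j, l =>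
      max
        (Real.exp (-(r * dt)) *
          ∑ k ∈ Finset.Icc (-(m : ℤ)) (m : ℤ),
            (VAfull n m q p dt S0 K σ h r d (j + 1) (l + k) * p +
              VAfull n m q p dt S0 K σ h r d j (l + k) * (1 - p)) * q k)
        (K - Sval S0 σ dt h ((n : ℝ) - (d + 1)) j l)

/-- Truncated backward European put price with boundary value `b`;
`VEtr … d j l` is the value `V_E^b(n-d, j, l)`. -/
def VEtr (n m : ℕ) (q : ℤ → ℝ) (p dt S0 K σ h r b : ℝ) (kbar lbar : ℕ) :
    ℕ → ℕ → ℤ → ℝ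
  | 0, j, l =>
      if -(lbar : ℤ) ≤ l ∧ l ≤ (kbar : ℤ) then max (K - Sval S0 σ dt h (n : ℝ) j l) 0 else b
  | (d + 1), j, l =>
      if -(lbar : ℤ) ≤ l ∧ l ≤ (kbar : ℤ) then
        Real.exp (-(r * dt)) *
          ∑ k ∈ Finset.Icc (-(m : ℤ)) (m : ℤ),
            (VEtr n m q p dt S0 K σ h r b kbar lbar d (j + 1) (l + k) * p +
              VEtr n m q p dt S0 K σ h r b kbar lbar d j (l + k) * (1 - p)) * q k
      else b

/-- Truncated backward American put price with boundary value `b`;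
`VAtr … d j l` is the value `V_A^b(n-d, j, l)`. -/
def VAtr (n m : ℕ) (q : ℤ → ℝ) (p dt S0 K σ h r b : ℝ) (kbar lbar : ℕ) :
    ℕ → ℕ → ℤ → ℝ
  | 0, j, l =>
      if -(lbar : ℤ) ≤ l ∧ l ≤ (kbar : ℤ) then max (K - Sval S0 σ dt h (n : ℝ) j l) 0 else b
  | (d + 1), j, l =>
      if -(lbar : ℤ) ≤ l ∧ l ≤ (kbar : ℤ) then
        max
          (Real.exp (-(r * dt)) *
            ∑ k ∈ Finset.Icc (-(m : ℤ)) (m : ℤ),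
              (VAtr n m q p dt S0 K σ h r b kbar lbar d (j + 1) (l + k) * p +
                VAtr n m q p dt S0 K σ h r b kbar lbar d j (l + k) * (1 - p)) * q k)
          (K - Sval S0 σ dt h ((n : ℝ) - (d + 1)) j l)
      else b

/-- The sum, over all jump-path prefixes that first exit the band `[-l̄, k̄]` at some time
`1 ≤ i ≤ n`, of the prefix probability times `b e^{-r i Δt}`. -/
def exitSum (n m : ℕ) (q : ℤ → ℝ) (r dt : ℝ) (kbar lbar : ℕ) (b : ℝ) : ℝ :=
  ∑ i ∈ Finset.Icc 1 n,
    ∑ y ∈ (paths i m).filter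
        (fun y =>
          (∀ t < i, -(lbar : ℤ) ≤ levelAt i y t ∧ levelAt i y t ≤ (kbar : ℤ)) ∧
          ¬(-(lbar : ℤ) ≤ levelAt i y i ∧ levelAt i y i ≤ (kbar : ℤ))),
      pathWeight i q y * (b * Real.exp (-(r * (i : ℝ) * dt)))

end HScut

open HScut
open scoped Nat

theorem pow_add_div_factorial_le {u : ℝ} (hu : 0 ≤ u) (m j : ℕ) :
    u ^ (m + j) / (m + j)! ≤ u ^ m / m ! * (u / (m + 1)) ^ j := by
  have hfac : (m ! : ℝ) * (m + 1) ^ j ≤ (m + j)! := by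
    exact_mod_cast Nat.factorial_mul_pow_le_factorial
  calc u ^ (m + j) / (m + j)! ≤ u ^ (m + j) / (m ! * (m + 1) ^ j) := by
        gcongr
    _ = u ^ m / m ! * (u / (m + 1)) ^ j := by
        rw [pow_add, div_pow]; ring

theorem sum_Icc_pow_div_factorial_le {u : ℝ} (hu : 0 ≤ u) {m : ℕ} (hm : 2 * u ≤ m + 1)
    (N : ℕ) :
    ∑ k ∈ Icc m N, u ^ k / k ! ≤ 2 * (u ^ m / m !) := by
  have hratio : u / (m + 1) ≤ 1 / 2 := by
    rw [div_le_div_iff₀ (by positivity) two_pos]; linarith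
  calc ∑ k ∈ Icc m N, u ^ k / k !
      = ∑ j ∈ range (N + 1 - m), u ^ (m + j) / (m + j)! := by
        rw [← Finset.Ico_add_one_right_eq_Icc, sum_Ico_eq_sum_range]
    _ ≤ ∑ j ∈ range (N + 1 - m), u ^ m / m ! * (1 / 2) ^ j := by
        gcongr with j
        exact (pow_add_div_factorial_le hu m j).trans (by gcongr)
    _ ≤ u ^ m / m ! * 2 := by
        rw [← mul_sum]; gcongr; exact sum_geometric_two_le _
    _ = 2 * (u ^ m / m !) := mul_comm _ _

namespace HScut

theorem levelAt_self (n : ℕ) (s : Fin n → ℤ) : levelAt n s n = ∑ i, s i := by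
  simp [levelAt]

theorem le_card_up_of_levelAt_eq {n k : ℕ} {s : Fin n → ℤ} (hs : s ∈ paths n 1)
    (hk : levelAt n s n = k) : k ≤ #{i | s i = 1} := by
  have hle : (k : ℤ) ≤ ∑ i, if s i = 1 then 1 else 0 := by
    rw [← hk, levelAt_self]
    gcongr with i
    have := Finset.mem_Icc.mp (Fintype.mem_piFinset.mp hs i)
    split_ifs <;> omega
  rw [sum_boole] at hle
  exact_mod_cast hle

def pathsUpOn {n : ℕ} (A : Finset (Fin n)) : Finset (Fin n → ℤ) :=
  Fintype.piFinset fun i => if i ∈ A then {1} else Icc (-1) 1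

theorem sum_pathsUpOn_prod {n : ℕ} (A : Finset (Fin n)) (f : ℤ → ℝ) :
    ∑ s ∈ pathsUpOn A, ∏ i, f (s i) = f 1 ^ #A * (∑ j ∈ Icc (-1) 1, f j) ^ (n - #A) := by
  rw [pathsUpOn, ← prod_univ_sum]
  simp only [apply_ite (fun t : Finset ℤ => ∑ j ∈ t, f j), sum_singleton]
  rw [prod_ite, prod_const, prod_const, filter_mem_eq_inter, univ_inter, filter_not,
    filter_mem_eq_inter, univ_inter, card_sdiff, inter_univ, card_univ, Fintype.card_fin]

theorem filter_levelAt_eq_subset_image_pathsUpOn {n k : ℕ} :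
    (paths n 1).filter (fun s => levelAt n s n = k) ⊆
      ((univ.powersetCard k).sigma fun A => pathsUpOn A).image Sigma.snd := by
  intro s hs
  obtain ⟨hsp, hsk⟩ := mem_filter.mp hs
  obtain ⟨A, hA, hAk⟩ := exists_subset_card_eq (le_card_up_of_levelAt_eq hsp hsk)
  refine mem_image.mpr
    ⟨⟨A, s⟩, mem_sigma.mpr ⟨mem_powersetCard.mpr ⟨subset_univ A, hAk⟩, ?_⟩, rfl⟩
  refine Fintype.mem_piFinset.mpr fun i => ?_
  split_ifs with hi
  · exact mem_singleton.mpr (mem_filter.mp (hA hi)).2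
  · exact Fintype.mem_piFinset.mp hsp i

theorem sum_filter_levelAt_prod_le {n : ℕ} (k : ℕ) {f : ℤ → ℝ}
    (hf : ∀ j ∈ Icc (-1) 1, 0 ≤ f j) :
    ∑ s ∈ (paths n 1).filter (fun s => levelAt n s n = k), ∏ i, f (s i) ≤
      n.choose k * (f 1 ^ k * (∑ j ∈ Icc (-1) 1, f j) ^ (n - k)) := by
  have hnonneg : ∀ A : Finset (Fin n), ∀ s ∈ pathsUpOn A, 0 ≤ ∏ i, f (s i) :=
    fun A s hs =>
      prod_nonneg fun i _ => hf _ (by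
        have := Fintype.mem_piFinset.mp hs i
        split_ifs at this <;> simp_all)
  calc _ ≤ ∑ s ∈ ((univ.powersetCard k).sigma fun A => pathsUpOn A).image Sigma.snd,
          ∏ i, f (s i) := by
        refine sum_le_sum_of_subset_of_nonneg filter_levelAt_eq_subset_image_pathsUpOn
          fun s hs _ => ?_
        obtain ⟨⟨A, s⟩, hAs, rfl⟩ := mem_image.mp hs
        exact hnonneg A s (mem_sigma.mp hAs).2
    _ ≤ ∑ As ∈ (univ.powersetCard k).sigma fun A => pathsUpOn A, ∏ i, f (As.2 i) := by
        refine sum_image_le_of_nonneg fun s hs => ?_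
        obtain ⟨⟨A, s⟩, hAs, rfl⟩ := mem_image.mp hs
        exact hnonneg A s (mem_sigma.mp hAs).2
    _ = ∑ A ∈ univ.powersetCard k, f 1 ^ k * (∑ j ∈ Icc (-1) 1, f j) ^ (n - k) := by
        rw [sum_sigma]
        refine sum_congr rfl fun A hA => ?_
        rw [sum_pathsUpOn_prod, (mem_powersetCard.mp hA).2]
    _ = _ := by rw [sum_const, card_powersetCard, card_univ, Fintype.card_fin, nsmul_eq_mul]

theorem qtilde_le_exp_mul_pow_div_factorial {n : ℕ} (k : ℕ) {q : ℤ → ℝ}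
    (hqm : 0 ≤ q (-1)) (hq0 : 0 ≤ q 0) (hqp : 0 ≤ q 1) (hsum : q (-1) + q 0 + q 1 = 1) :
    qtilde n 1 q k ≤
      Real.exp (n * max (q 1) (q (-1))) * (n * max (q 1) (q (-1))) ^ k / k ! := by
  set M := max (q 1) (q (-1))
  set f : ℤ → ℝ := fun j => if j = 0 then q 0 else max (q j) (q (-j))
  have hM : 0 ≤ M := le_max_of_le_left hqp
  have hIcc : Icc (-1 : ℤ) 1 = {-1, 0, 1} := by decide
  have hf : ∀ j ∈ Icc (-1 : ℤ) 1, 0 ≤ f j := by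
    simp only [hIcc, mem_insert, mem_singleton]
    rintro j (rfl | rfl | rfl) <;> simp [f, hq0, hqm, hqp]
  have hmass : ∑ j ∈ Icc (-1 : ℤ) 1, f j = q 0 + 2 * M := by
    simp [hIcc, f, M, max_comm (q (-1))]; ring
  have hmass_le : q 0 + 2 * M ≤ Real.exp M := by
    have : M ≤ q 1 + q (-1) := max_le (by linarith) (by linarith)
    linarith [Real.add_one_le_exp M]
  calc qtilde n 1 q k ≤ n.choose k * (M ^ k * (q 0 + 2 * M) ^ (n - k)) := by
        -- `modWeight n q s` is `∏ i, f (s i)` by definition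
        rw [← hmass]
        exact sum_filter_levelAt_prod_le k hf
    _ ≤ n ^ k / k ! * (M ^ k * Real.exp M ^ n) := by
        gcongr
        · exact Nat.choose_le_pow_div k n
        · calc (q 0 + 2 * M) ^ (n - k) ≤ Real.exp M ^ (n - k) := by
                gcongr
            _ ≤ Real.exp M ^ n := pow_le_pow_right₀ (Real.one_le_exp hM) (Nat.sub_le n k)
    _ = _ := by rw [← Real.exp_nat_mul, mul_pow]; ring

end HScut

open HScut

theorem qtilde_exp_tail_sum_bound_general (n : ℕ) (q : ℤ → ℝ)
    (hqm : 0 ≤ q (-1)) (hq0 : 0 ≤ q 0) (hqp : 0 ≤ q 1)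
    (hsum : q (-1) + q 0 + q 1 = 1)
    (w : ℝ) (hw : w = (n : ℝ) * max (q 1) (q (-1)))
    (h : ℝ)
    (kbar : ℕ) (hk1 : 2 * Real.exp h * w - 1 ≤ (kbar : ℝ)) :
    (∑ k ∈ Finset.Icc kbar n, Real.exp (h * (k : ℝ)) * qtilde n 1 q (k : ℤ)) ≤
      4 * Real.exp w * (Real.exp h * w) ^ kbar / (Nat.factorial kbar : ℝ) := by
  have hw0 : 0 ≤ w := hw ▸ mul_nonneg n.cast_nonneg (le_max_of_le_left hqp)
  set u := Real.exp h * w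
  have hu : 2 * u ≤ kbar + 1 := by linarith
  calc ∑ k ∈ Icc kbar n, Real.exp (h * k) * qtilde n 1 q k
      ≤ ∑ k ∈ Icc kbar n, Real.exp w * (u ^ k / k !) := by
        refine sum_le_sum fun k _ => ?_
        calc Real.exp (h * k) * qtilde n 1 q k
            ≤ Real.exp (h * k) * (Real.exp w * w ^ k / k !) := by
              gcongr
              rw [hw]
              exact qtilde_le_exp_mul_pow_div_factorial k hqm hq0 hqp hsum
          _ = Real.exp w * (u ^ k / k !) := by
              rw [mul_comm h, Real.exp_nat_mul, mul_pow]; ring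
    _ = Real.exp w * ∑ k ∈ Icc kbar n, u ^ k / k ! := (mul_sum _ _ _).symm
    _ ≤ Real.exp w * (2 * (u ^ kbar / kbar !)) := by
        gcongr
        exact sum_Icc_pow_div_factorial_le (by positivity) hu n
    _ ≤ 4 * (Real.exp w * (u ^ kbar / kbar !)) := by
        have : 0 ≤ Real.exp w * (u ^ kbar / kbar !) := by positivity
        linarith
    _ = 4 * Real.exp w * u ^ kbar / kbar ! := by ring

/-- For `h > 0` and every integer `k̄` with `2 e^h w − 1 ≤ k̄ ≤ n` one has
`∑_{k=k̄}^{n} e^{hk} q̃^{(n)}(k) ≤ 4 e^w (e^h w)^{k̄} / k̄!`. -/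
theorem qtilde_exp_tail_sum_bound (n : ℕ) (hn : 1 ≤ n) (q : ℤ → ℝ)
    (hqm : 0 ≤ q (-1)) (hq0 : 0 ≤ q 0) (hqp : 0 ≤ q 1)
    (hsum : q (-1) + q 0 + q 1 = 1)
    (w : ℝ) (hw : w = (n : ℝ) * max (q 1) (q (-1)))
    (h : ℝ) (hh : 0 < h)
    (kbar : ℕ) (hk1 : 2 * Real.exp h * w - 1 ≤ (kbar : ℝ)) (hk2 : kbar ≤ n) :
    (∑ k ∈ Finset.Icc kbar n, Real.exp (h * (k : ℝ)) * qtilde n 1 q (k : ℤ)) ≤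
      4 * Real.exp w * (Real.exp h * w) ^ kbar / (Nat.factorial kbar : ℝ) :=
  qtilde_exp_tail_sum_bound_general n q hqm hq0 hqp hsum w hw h kbar hk1
end
end

section
/- Let k̄ = l̄ be a nonnegative integer. Then the European put values on the full and on the truncated tree satisfy V − V^{TT} ≤ 4·e^{−rτ}·K·∑_{k=k̄+1}^{n} q̃^{(n)}(k). -/
open Finset

open scoped Classical

noncomputable section

open HScut

/-!
Over jump paths, `V − V^{TT}` is `e^{−rτ}` times the binomially averaged payoff (at most `K`)
weighted by `π ≤ π̃`, summed over the paths that leave the band `[−k̄, k̄]`. Such a path reaches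
`k̄ + 1` or `−k̄ − 1`. Since `π̃` ignores the signs of the jumps, both events have the same
`π̃`-mass, and reflecting a path after it first hits `k̄ + 1` shows that the first has at most
twice the mass of ending at or above `k̄ + 1`, which is `∑_{k > k̄} q̃^{(n)}(k)`.
-/

namespace HScut

section Levels

variable {n m : ℕ}

lemma mem_paths {s : Fin n → ℤ} : s ∈ paths n m ↔ ∀ i, -(m : ℤ) ≤ s i ∧ s i ≤ m := by
  simp [paths, Fintype.mem_piFinset]

lemma levelAt_zero (s : Fin n → ℤ) : levelAt n s 0 = 0 := by
  simp [levelAt]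

lemma levelAt_succ (s : Fin n → ℤ) {t : ℕ} (ht : t < n) :
    levelAt n s (t + 1) = levelAt n s t + s ⟨t, ht⟩ := by
  have hset : Finset.univ.filter (fun i : Fin n => (i : ℕ) < t + 1) =
      insert ⟨t, ht⟩ (Finset.univ.filter (fun i : Fin n => (i : ℕ) < t)) := by
    ext i
    simp only [Finset.mem_filter, Finset.mem_insert, Finset.mem_univ, true_and, Fin.ext_iff]
    omega
  rw [levelAt, hset, Finset.sum_insert (by simp), add_comm]
  rfl

lemma levelAt_eq_add_sum_of_le (s : Fin n → ℤ) {T t : ℕ} (hTt : T ≤ t) :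
    levelAt n s t = levelAt n s T +
      ∑ i ∈ Finset.univ.filter (fun i : Fin n => T ≤ (i : ℕ) ∧ (i : ℕ) < t), s i := by
  rw [levelAt, levelAt, ← Finset.sum_union]
  · congr 1
    ext i
    simp only [Finset.mem_filter, Finset.mem_union, Finset.mem_univ, true_and]
    omega
  · rw [Finset.disjoint_left]
    intro i hi hi'
    simp only [Finset.mem_filter, Finset.mem_univ, true_and] at hi hi'
    omega

lemma abs_levelAt_le {s : Fin n → ℤ} (hs : s ∈ paths n m) (t : ℕ) :
    |levelAt n s t| ≤ m * n := by
  rw [mem_paths] at hs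
  calc |levelAt n s t|
      ≤ ∑ i ∈ Finset.univ.filter (fun i : Fin n => (i : ℕ) < t), |s i| :=
        Finset.abs_sum_le_sum_abs _ _
    _ ≤ ∑ _i : Fin n, (m : ℤ) :=
        Finset.sum_le_sum_of_subset_of_nonneg (Finset.filter_subset _ _)
          (fun _ _ _ => abs_nonneg _) |>.trans
          (Finset.sum_le_sum fun i _ => abs_le.mpr (hs i))
    _ = m * n := by simp [mul_comm]

lemma levelAt_neg (s : Fin n → ℤ) (t : ℕ) : levelAt n (-s) t = -levelAt n s t := by
  simp [levelAt]

lemma neg_mem_paths {s : Fin n → ℤ} (hs : s ∈ paths n m) : -s ∈ paths n m := by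
  rw [mem_paths] at hs ⊢
  intro i
  have := hs i
  simp only [Pi.neg_apply]
  omega

end Levels

section Reflection

variable {n : ℕ}

def reflectFrom (T : ℕ) (s : Fin n → ℤ) : Fin n → ℤ :=
  fun i => if (i : ℕ) < T then s i else -s i

lemma reflectFrom_reflectFrom (T : ℕ) (s : Fin n → ℤ) :
    reflectFrom T (reflectFrom T s) = s := by
  funext i
  by_cases hi : (i : ℕ) < T <;> simp [reflectFrom, hi]

lemma reflectFrom_mem_paths {m T : ℕ} {s : Fin n → ℤ} (hs : s ∈ paths n m) :
    reflectFrom T s ∈ paths n m := by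
  rw [mem_paths] at hs ⊢
  intro i
  have := hs i
  by_cases hi : (i : ℕ) < T <;> simp only [reflectFrom, hi, if_true, if_false] <;> omega

lemma levelAt_reflectFrom_of_le {T t : ℕ} (s : Fin n → ℤ) (ht : t ≤ T) :
    levelAt n (reflectFrom T s) t = levelAt n s t := by
  refine Finset.sum_congr rfl fun i hi => ?_
  simp only [Finset.mem_filter, Finset.mem_univ, true_and] at hi
  simp [reflectFrom, show (i : ℕ) < T by omega]

lemma levelAt_reflectFrom_of_ge {T t : ℕ} (s : Fin n → ℤ) (ht : T ≤ t) :
    levelAt n (reflectFrom T s) t = 2 * levelAt n s T - levelAt n s t := by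
  have hflip : ∑ i ∈ Finset.univ.filter (fun i : Fin n => T ≤ (i : ℕ) ∧ (i : ℕ) < t),
      reflectFrom T s i =
      -∑ i ∈ Finset.univ.filter (fun i : Fin n => T ≤ (i : ℕ) ∧ (i : ℕ) < t), s i := by
    rw [← Finset.sum_neg_distrib]
    refine Finset.sum_congr rfl fun i hi => ?_
    simp only [Finset.mem_filter, Finset.mem_univ, true_and] at hi
    simp [reflectFrom, show ¬(i : ℕ) < T by omega]
  rw [levelAt_eq_add_sum_of_le _ ht, levelAt_eq_add_sum_of_le s ht, hflip,
    levelAt_reflectFrom_of_le s le_rfl]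
  ring

/-- Junk value `0` when the level never reaches `c`. -/
def hitTime (n : ℕ) (c : ℤ) (s : Fin n → ℤ) : ℕ :=
  if h : ∃ t, c ≤ levelAt n s t then Nat.find h else 0

variable {c : ℤ} {s : Fin n → ℤ} {t : ℕ}

lemma hitTime_le (ht : c ≤ levelAt n s t) : hitTime n c s ≤ t := by
  rw [hitTime, dif_pos ⟨t, ht⟩]
  exact Nat.find_le ht

lemma le_levelAt_hitTime (ht : c ≤ levelAt n s t) : c ≤ levelAt n s (hitTime n c s) := by
  rw [hitTime, dif_pos ⟨t, ht⟩]
  exact Nat.find_spec (⟨t, ht⟩ : ∃ t, c ≤ levelAt n s t)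

lemma levelAt_lt_of_lt_hitTime {t' : ℕ} (ht' : t' < hitTime n c s) : levelAt n s t' < c := by
  by_cases h : ∃ t, c ≤ levelAt n s t
  · rw [hitTime, dif_pos h] at ht'
    exact not_le.mp (Nat.find_min h ht')
  · simp [hitTime, h] at ht'

/-- With jumps in `{-1, 0, 1}` the level cannot overshoot `c`. -/
lemma levelAt_hitTime (hs : s ∈ paths n 1) (hc : 0 ≤ c) (htn : t ≤ n)
    (ht : c ≤ levelAt n s t) : levelAt n s (hitTime n c s) = c := by
  have hhit := le_levelAt_hitTime ht
  obtain h0 | ⟨t', hT⟩ : hitTime n c s = 0 ∨ ∃ t', hitTime n c s = t' + 1 :=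
    Nat.eq_zero_or_eq_succ_pred _ |>.imp id fun h => ⟨_, h⟩
  · rw [h0, levelAt_zero] at hhit ⊢
    omega
  · have ht'n : t' < n := by have := hitTime_le ht; omega
    have hbefore := levelAt_lt_of_lt_hitTime (show t' < hitTime n c s by omega)
    have hjump := (mem_paths.mp hs) ⟨t', ht'n⟩
    rw [hT, levelAt_succ s ht'n] at hhit ⊢
    omega

lemma hitTime_reflectFrom_hitTime (ht : c ≤ levelAt n s t) :
    hitTime n c (reflectFrom (hitTime n c s) s) = hitTime n c s := by
  have hhit : c ≤ levelAt n (reflectFrom (hitTime n c s) s) (hitTime n c s) := by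
    rw [levelAt_reflectFrom_of_le s le_rfl]
    exact le_levelAt_hitTime ht
  refine le_antisymm (hitTime_le hhit) (not_lt.mp fun hlt => ?_)
  have hreach := le_levelAt_hitTime hhit
  rw [levelAt_reflectFrom_of_le s hlt.le] at hreach
  exact (levelAt_lt_of_lt_hitTime hlt).not_ge hreach

lemma levelAt_reflectFrom_hitTime (hs : s ∈ paths n 1) (hc : 0 ≤ c) (htn : t ≤ n)
    (ht : c ≤ levelAt n s t) :
    levelAt n (reflectFrom (hitTime n c s) s) n = 2 * c - levelAt n s n := by
  rw [levelAt_reflectFrom_of_ge s ((hitTime_le ht).trans htn), levelAt_hitTime hs hc htn ht]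

end Reflection

section Weights

variable {n m : ℕ} {q : ℤ → ℝ}

lemma modWeight_eq_of_forall_eq_or_eq_neg {s s' : Fin n → ℤ}
    (h : ∀ i, s' i = s i ∨ s' i = -s i) : modWeight n q s' = modWeight n q s := by
  refine Finset.prod_congr rfl fun i _ => ?_
  rcases h i with hi | hi
  · rw [hi]
  · by_cases h0 : s i = 0
    · simp [hi, h0]
    · simp [hi, h0, max_comm]

lemma modWeight_reflectFrom (T : ℕ) (s : Fin n → ℤ) :
    modWeight n q (reflectFrom T s) = modWeight n q s :=
  modWeight_eq_of_forall_eq_or_eq_neg fun i => by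
    by_cases hi : (i : ℕ) < T <;> simp [reflectFrom, hi]

lemma modWeight_neg (s : Fin n → ℤ) : modWeight n q (-s) = modWeight n q s :=
  modWeight_eq_of_forall_eq_or_eq_neg fun _ => Or.inr rfl

variable (hq : ∀ k ∈ Finset.Icc (-(m : ℤ)) m, 0 ≤ q k)
include hq

lemma pathWeight_nonneg {s : Fin n → ℤ} (hs : s ∈ paths n m) : 0 ≤ pathWeight n q s :=
  Finset.prod_nonneg fun i _ => hq _ (Finset.mem_Icc.mpr (mem_paths.mp hs i))

lemma pathWeight_le_modWeight {s : Fin n → ℤ} (hs : s ∈ paths n m) :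
    pathWeight n q s ≤ modWeight n q s := by
  refine Finset.prod_le_prod (fun i _ => hq _ (Finset.mem_Icc.mpr (mem_paths.mp hs i)))
    fun i _ => ?_
  split_ifs with h0
  · rw [h0]
  · exact le_max_left _ _

lemma modWeight_nonneg {s : Fin n → ℤ} (hs : s ∈ paths n m) : 0 ≤ modWeight n q s :=
  (pathWeight_nonneg hq hs).trans (pathWeight_le_modWeight hq hs)

end Weights

section Tails

variable {n m : ℕ} (q : ℤ → ℝ)

/-- The reflection principle, for the `π̃`-weights (which do not see the signs of the jumps). -/
theorem sum_modWeight_reach_and_levelAt_lt_eq {c : ℤ} (hc : 0 ≤ c) :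
    ∑ s ∈ (paths n 1).filter (fun s => (∃ t ≤ n, c ≤ levelAt n s t) ∧ levelAt n s n < c),
      modWeight n q s =
    ∑ s ∈ (paths n 1).filter (fun s => c < levelAt n s n), modWeight n q s := by
  refine Finset.sum_nbij' (fun s => reflectFrom (hitTime n c s) s)
    (fun s => reflectFrom (hitTime n c s) s) ?_ ?_ ?_ ?_
    fun s _ => (modWeight_reflectFrom _ s).symm
  · intro s hs
    simp only [Finset.mem_filter] at hs ⊢
    obtain ⟨hsp, ⟨t, htn, ht⟩, hlt⟩ := hs
    refine ⟨reflectFrom_mem_paths hsp, ?_⟩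
    rw [levelAt_reflectFrom_hitTime hsp hc htn ht]
    omega
  · intro s hs
    simp only [Finset.mem_filter] at hs ⊢
    obtain ⟨hsp, hgt⟩ := hs
    refine ⟨reflectFrom_mem_paths hsp, ⟨hitTime n c s, hitTime_le hgt.le, ?_⟩, ?_⟩
    · rw [levelAt_reflectFrom_of_le s le_rfl]
      exact le_levelAt_hitTime hgt.le
    · rw [levelAt_reflectFrom_hitTime hsp hc le_rfl hgt.le]
      omega
  · intro s hs
    obtain ⟨⟨t, -, ht⟩, -⟩ := (Finset.mem_filter.mp hs).2
    simp only [hitTime_reflectFrom_hitTime ht, reflectFrom_reflectFrom]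
  · intro s hs
    have ht := (Finset.mem_filter.mp hs).2.le
    simp only [hitTime_reflectFrom_hitTime ht, reflectFrom_reflectFrom]

lemma sum_modWeight_reach_le {c : ℤ} (hc : 0 ≤ c)
    (hq : ∀ k ∈ Finset.Icc (-1 : ℤ) 1, 0 ≤ q k) :
    ∑ s ∈ (paths n 1).filter (fun s => ∃ t ≤ n, c ≤ levelAt n s t), modWeight n q s ≤
      2 * ∑ s ∈ (paths n 1).filter (fun s => c ≤ levelAt n s n), modWeight n q s := by
  have hsplit := Finset.sum_filter_add_sum_filter_not
    ((paths n 1).filter fun s => ∃ t ≤ n, c ≤ levelAt n s t)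
    (fun s => c ≤ levelAt n s n) (modWeight n q)
  simp only [Finset.filter_filter, not_le] at hsplit
  have hend : ((paths n 1).filter fun s => (∃ t ≤ n, c ≤ levelAt n s t) ∧ c ≤ levelAt n s n) =
      (paths n 1).filter fun s => c ≤ levelAt n s n :=
    Finset.filter_congr fun s _ => ⟨And.right, fun h => ⟨⟨n, le_rfl, h⟩, h⟩⟩
  have hstrict : ∑ s ∈ (paths n 1).filter (fun s => c < levelAt n s n), modWeight n q s ≤
      ∑ s ∈ (paths n 1).filter (fun s => c ≤ levelAt n s n), modWeight n q s :=
    Finset.sum_le_sum_of_subset_of_nonneg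
      (Finset.monotone_filter_right _ fun _ _ => le_of_lt)
      fun s hs _ => modWeight_nonneg hq (Finset.mem_filter.mp hs).1
  rw [hend, sum_modWeight_reach_and_levelAt_lt_eq q hc] at hsplit
  linarith

lemma sum_modWeight_reach_neg_eq (c : ℤ) :
    ∑ s ∈ (paths n m).filter (fun s => ∃ t ≤ n, levelAt n s t ≤ -c), modWeight n q s =
      ∑ s ∈ (paths n m).filter (fun s => ∃ t ≤ n, c ≤ levelAt n s t), modWeight n q s := by
  refine Finset.sum_nbij' Neg.neg Neg.neg ?_ ?_ (fun s _ => neg_neg s) (fun s _ => neg_neg s)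
    fun s _ => (modWeight_neg s).symm
  all_goals
    intro s hs
    simp only [Finset.mem_filter, levelAt_neg] at hs ⊢
    obtain ⟨hsp, t, htn, ht⟩ := hs
    exact ⟨neg_mem_paths hsp, t, htn, by omega⟩

lemma sum_modWeight_levelAt_ge_eq_sum_qtilde (kbar : ℕ) :
    ∑ s ∈ (paths n 1).filter (fun s => (kbar : ℤ) + 1 ≤ levelAt n s n), modWeight n q s =
      ∑ k ∈ Finset.Icc (kbar + 1) n, qtilde n 1 q k := by
  rw [← Finset.sum_fiberwise_of_maps_to (g := fun s => (levelAt n s n).toNat)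
    (t := Finset.Icc (kbar + 1) n)]
  · refine Finset.sum_congr rfl fun k hk => Finset.sum_congr ?_ fun _ _ => rfl
    rw [Finset.mem_Icc] at hk
    ext s
    simp only [Finset.mem_filter, and_assoc]
    exact and_congr_right fun _ => by omega
  · intro s hs
    rw [Finset.mem_filter] at hs
    have hbound := abs_le.mp (abs_levelAt_le hs.1 n)
    rw [Finset.mem_Icc]
    omega

lemma sum_modWeight_exit_band_le (hq : ∀ k ∈ Finset.Icc (-1 : ℤ) 1, 0 ≤ q k)
    (kbar : ℕ) :
    ∑ s ∈ (paths n 1).filter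
        (fun s => ¬∀ t ≤ n, -(kbar : ℤ) ≤ levelAt n s t ∧ levelAt n s t ≤ kbar),
      modWeight n q s ≤ 4 * ∑ k ∈ Finset.Icc (kbar + 1) n, qtilde n 1 q k := by
  set U := (paths n 1).filter fun s => ∃ t ≤ n, (kbar : ℤ) + 1 ≤ levelAt n s t
  set D := (paths n 1).filter fun s => ∃ t ≤ n, levelAt n s t ≤ -((kbar : ℤ) + 1)
  have hnonneg : ∀ s ∈ paths n 1, 0 ≤ modWeight n q s := fun s hs => modWeight_nonneg hq hs
  have hexit : ∑ s ∈ (paths n 1).filter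
        (fun s => ¬∀ t ≤ n, -(kbar : ℤ) ≤ levelAt n s t ∧ levelAt n s t ≤ kbar),
      modWeight n q s ≤ ∑ s ∈ U ∪ D, modWeight n q s := by
    refine Finset.sum_le_sum_of_subset_of_nonneg (fun s hs => ?_) fun s hs _ => ?_
    · simp only [Finset.mem_filter, not_forall, U, D, Finset.mem_union] at hs ⊢
      obtain ⟨hsp, t, htn, hout⟩ := hs
      by_cases hup : (kbar : ℤ) + 1 ≤ levelAt n s t
      · exact Or.inl ⟨hsp, t, htn, hup⟩
      · exact Or.inr ⟨hsp, t, htn, by omega⟩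
    · rcases Finset.mem_union.mp hs with hs | hs <;> exact hnonneg s (Finset.mem_filter.mp hs).1
  have hinter : 0 ≤ ∑ s ∈ U ∩ D, modWeight n q s :=
    Finset.sum_nonneg fun s hs =>
      hnonneg s (Finset.mem_filter.mp (Finset.mem_inter.mp hs).1).1
  have hunion := Finset.sum_union_inter (s₁ := U) (s₂ := D) (f := modWeight n q)
  have hdown : ∑ s ∈ D, modWeight n q s = ∑ s ∈ U, modWeight n q s :=
    sum_modWeight_reach_neg_eq q _
  have hup := sum_modWeight_reach_le (n := n) q (c := (kbar : ℤ) + 1) (by positivity) hq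
  rw [sum_modWeight_levelAt_ge_eq_sum_qtilde] at hup
  linarith

end Tails

section Pricing

variable {n m : ℕ} {p S0 K σ dt h : ℝ}

lemma binomP_nonneg (hp0 : 0 ≤ p) (hp1 : p ≤ 1) (j : ℕ) : 0 ≤ binomP n p j := by
  have : 0 ≤ 1 - p := sub_nonneg.mpr hp1
  unfold binomP
  positivity

lemma sum_binomP (n : ℕ) (p : ℝ) : ∑ j ∈ Finset.range (n + 1), binomP n p j = 1 := by
  have hbinom := add_pow p (1 - p) n
  rw [add_sub_cancel, one_pow] at hbinom
  rw [hbinom]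
  exact Finset.sum_congr rfl fun j _ => by unfold binomP; ring

lemma putPayoff_le (hS0 : 0 ≤ S0) (hK : 0 ≤ K) (j : ℕ) (k : ℤ) :
    putPayoff n S0 K σ dt h j k ≤ K :=
  max_le (sub_le_self _ (by positivity)) hK

def expectedPayoff (n : ℕ) (S0 K σ dt h p : ℝ) (k : ℤ) : ℝ :=
  ∑ j ∈ Finset.range (n + 1), putPayoff n S0 K σ dt h j k * binomP n p j

lemma expectedPayoff_le (hS0 : 0 ≤ S0) (hK : 0 ≤ K) (hp0 : 0 ≤ p) (hp1 : p ≤ 1) (k : ℤ) :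
    expectedPayoff n S0 K σ dt h p k ≤ K :=
  calc expectedPayoff n S0 K σ dt h p k
      ≤ ∑ j ∈ Finset.range (n + 1), K * binomP n p j :=
        Finset.sum_le_sum fun j _ =>
          mul_le_mul_of_nonneg_right (putPayoff_le hS0 hK j k) (binomP_nonneg hp0 hp1 j)
    _ = K := by rw [← Finset.mul_sum, sum_binomP, mul_one]

lemma sum_mul_sum_filter_eq_sum {α : Type*} (S : Finset α) (g : α → ℤ) {T : Finset ℤ}
    (hg : ∀ s ∈ S, g s ∈ T) (f : ℤ → ℝ) (w : α → ℝ) :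
    ∑ k ∈ T, f k * ∑ s ∈ S.filter (fun s => g s = k), w s = ∑ s ∈ S, f (g s) * w s := by
  rw [← Finset.sum_fiberwise_of_maps_to hg]
  refine Finset.sum_congr rfl fun k _ => ?_
  rw [Finset.mul_sum]
  exact Finset.sum_congr rfl fun s hs => by rw [(Finset.mem_filter.mp hs).2]

lemma Vput_eq_sum_paths (q : ℤ → ℝ) (τ r : ℝ) :
    Vput n m q p S0 K σ τ h r = Real.exp (-(r * τ)) *
      ∑ s ∈ paths n m, expectedPayoff n S0 K σ (τ / n) h p (levelAt n s n) * pathWeight n q s := by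
  rw [Vput, ← sum_mul_sum_filter_eq_sum _ _
    fun s hs => Finset.mem_Icc.mpr (abs_le.mp (abs_levelAt_le hs n))]
  simp only [← Finset.sum_mul, qfull, expectedPayoff]

lemma VTT_eq_sum_paths (q : ℤ → ℝ) (τ r : ℝ) (kbar lbar : ℕ) :
    VTT n m q p S0 K σ τ h r kbar lbar = Real.exp (-(r * τ)) *
      ∑ s ∈ (paths n m).filter
          (fun s => ∀ t ≤ n, -(lbar : ℤ) ≤ levelAt n s t ∧ levelAt n s t ≤ kbar),
        expectedPayoff n S0 K σ (τ / n) h p (levelAt n s n) * pathWeight n q s := by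
  rw [VTT, ← sum_mul_sum_filter_eq_sum ((paths n m).filter
      (fun s => ∀ t ≤ n, -(lbar : ℤ) ≤ levelAt n s t ∧ levelAt n s t ≤ kbar)) _
    fun s hs => Finset.mem_Icc.mpr ((Finset.mem_filter.mp hs).2 n le_rfl)]
  simp only [← Finset.sum_mul, qcut, expectedPayoff, Finset.filter_filter, and_comm]

lemma Vput_sub_VTT (q : ℤ → ℝ) (τ r : ℝ) (kbar lbar : ℕ) :
    Vput n m q p S0 K σ τ h r - VTT n m q p S0 K σ τ h r kbar lbar = Real.exp (-(r * τ)) *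
      ∑ s ∈ (paths n m).filter
          (fun s => ¬∀ t ≤ n, -(lbar : ℤ) ≤ levelAt n s t ∧ levelAt n s t ≤ kbar),
        expectedPayoff n S0 K σ (τ / n) h p (levelAt n s n) * pathWeight n q s := by
  rw [Vput_eq_sum_paths, VTT_eq_sum_paths,
    ← Finset.sum_filter_add_sum_filter_not (paths n m)
      (fun s => ∀ t ≤ n, -(lbar : ℤ) ≤ levelAt n s t ∧ levelAt n s t ≤ kbar)]
  ring

lemma sum_expectedPayoff_mul_pathWeight_le {q : ℤ → ℝ}
    (hq : ∀ k ∈ Finset.Icc (-(m : ℤ)) m, 0 ≤ q k) (hS0 : 0 ≤ S0) (hK : 0 ≤ K)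
    (hp0 : 0 ≤ p) (hp1 : p ≤ 1) {P : Finset (Fin n → ℤ)} (hP : P ⊆ paths n m) :
    ∑ s ∈ P, expectedPayoff n S0 K σ dt h p (levelAt n s n) * pathWeight n q s ≤
      K * ∑ s ∈ P, modWeight n q s := by
  rw [Finset.mul_sum]
  exact Finset.sum_le_sum fun s hs =>
    mul_le_mul (expectedPayoff_le hS0 hK hp0 hp1 _) (pathWeight_le_modWeight hq (hP hs))
      (pathWeight_nonneg hq (hP hs)) hK

end Pricing

end HScut

theorem put_truncation_bound_one_general (n : ℕ) (q : ℤ → ℝ)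
    (hqm : 0 ≤ q (-1)) (hq0 : 0 ≤ q 0) (hqp : 0 ≤ q 1)
    (S0 K σ τ h r p : ℝ) (hS0 : 0 < S0) (hK : 0 < K)
    (hp0 : 0 ≤ p) (hp1 : p ≤ 1) (kbar : ℕ) :
    Vput n 1 q p S0 K σ τ h r - VTT n 1 q p S0 K σ τ h r kbar kbar ≤
      4 * Real.exp (-(r * τ)) * K * ∑ k ∈ Finset.Icc (kbar + 1) n, qtilde n 1 q (k : ℤ) := by
  have hq : ∀ k ∈ Finset.Icc (-1 : ℤ) 1, 0 ≤ q k := by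
    intro k hk
    obtain rfl | rfl | rfl : k = -1 ∨ k = 0 ∨ k = 1 := by
      rw [Finset.mem_Icc] at hk
      omega
    exacts [hqm, hq0, hqp]
  rw [Vput_sub_VTT]
  calc _ ≤ Real.exp (-(r * τ)) * (K * ∑ s ∈ _, modWeight n q s) :=
        mul_le_mul_of_nonneg_left (sum_expectedPayoff_mul_pathWeight_le hq hS0.le hK.le hp0 hp1
          (Finset.filter_subset _ _)) (Real.exp_pos _).le
    _ ≤ Real.exp (-(r * τ)) * (K * (4 * ∑ k ∈ Finset.Icc (kbar + 1) n, qtilde n 1 q k)) := by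
        gcongr
        exact sum_modWeight_exit_band_le q hq kbar
    _ = _ := by ring

/-- With `k̄ = l̄`, the European put values on the full and truncated tree (m = 1) satisfy
`V − V^{TT} ≤ 4 e^{−rτ} K ∑_{k=k̄+1}^{n} q̃^{(n)}(k)`. -/
theorem put_truncation_bound_one (n : ℕ) (hn : 1 ≤ n) (q : ℤ → ℝ)
    (hqm : 0 ≤ q (-1)) (hq0 : 0 ≤ q 0) (hqp : 0 ≤ q 1)
    (hsum : q (-1) + q 0 + q 1 = 1)
    (S0 K σ τ h r p : ℝ) (hS0 : 0 < S0) (hK : 0 < K) (hh : 0 < h) (hτ : 0 < τ)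
    (hp0 : 0 ≤ p) (hp1 : p ≤ 1) (kbar : ℕ) :
    Vput n 1 q p S0 K σ τ h r - VTT n 1 q p S0 K σ τ h r kbar kbar ≤
      4 * Real.exp (-(r * τ)) * K * ∑ k ∈ Finset.Icc (kbar + 1) n, qtilde n 1 q (k : ℤ) :=
  put_truncation_bound_one_general n q hqm hq0 hqp S0 K σ τ h r p hS0 hK hp0 hp1 kbar
end
end
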